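/- arXiv:1006.1671 — 4 statements merged into one kernel-verified Lean document; each statement's English description precedes it below -/
import Mathlib

section
/- The linear map from Λ¹⊗Λ² to Λ²⊗Λ¹ sending a tensor K_{abc} with K_{abc}=K_{a[bc]} (skew in its last two indices) to its skew-symmetrisation K_{[ab]c} over the first two indices is a linear isomorphism. -/
/-!
Write `L = K_{[ab]c}`. If `K` is skew in its last two slots, then
`K_{abc} = L_{abc} - L_{bca} + L_{cab}`: expanding the right-hand side, the six terms of `K`
cancel in pairs by skewness in the last two slots, except for two copies of `K_{abc}`.
Conversely, for `L` skew in its first two slots, this cyclic combination is skew in its last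
two slots and its skew-symmetrisation over the first two is `L` again. All the maps involved
are built from sums and permutations of arguments, so they preserve trilinearity.
-/

/-- A function `K : V → V → V → ℝ` is trilinear (linear in each argument). -/
def Trilinear {V : Type*} [AddCommGroup V] [Module ℝ V] (K : V → V → V → ℝ) : Prop :=
  (∀ a a' b c, K (a + a') b c = K a b c + K a' b c) ∧
  (∀ (r : ℝ) a b c, K (r • a) b c = r * K a b c) ∧
  (∀ a b b' c, K a (b + b') c = K a b c + K a b' c) ∧
  (∀ (r : ℝ) a b c, K a (r • b) c = r * K a b c) ∧
  (∀ a b c c', K a b (c + c') = K a b c + K a b c') ∧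
  (∀ (r : ℝ) a b c, K a b (r • c) = r * K a b c)

namespace Trilinear

variable {V : Type*} [AddCommGroup V] [Module ℝ V] {K K' : V → V → V → ℝ}

theorem swap₁₂ (hK : Trilinear K) : Trilinear fun a b c => K b a c :=
  let ⟨h₁, h₂, h₃, h₄, h₅, h₆⟩ := hK
  ⟨fun a a' b c => h₃ b a a' c, fun r a b c => h₄ r b a c,
    fun a b b' c => h₁ b b' a c, fun r a b c => h₂ r b a c,
    fun a b c c' => h₅ b a c c', fun r a b c => h₆ r b a c⟩

theorem rotate (hK : Trilinear K) : Trilinear fun a b c => K b c a :=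
  let ⟨h₁, h₂, h₃, h₄, h₅, h₆⟩ := hK
  ⟨fun a a' b c => h₅ b c a a', fun r a b c => h₆ r b c a,
    fun a b b' c => h₁ b b' c a, fun r a b c => h₂ r b c a,
    fun a b c c' => h₃ b c c' a, fun r a b c => h₄ r b c a⟩

theorem add (hK : Trilinear K) (hK' : Trilinear K') :
    Trilinear fun a b c => K a b c + K' a b c := by
  obtain ⟨h₁, h₂, h₃, h₄, h₅, h₆⟩ := hK
  obtain ⟨h₁', h₂', h₃', h₄', h₅', h₆'⟩ := hK'
  refine ⟨?_, ?_, ?_, ?_, ?_, ?_⟩ <;> intros <;> simp only [*] <;> ring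

theorem sub (hK : Trilinear K) (hK' : Trilinear K') :
    Trilinear fun a b c => K a b c - K' a b c := by
  obtain ⟨h₁, h₂, h₃, h₄, h₅, h₆⟩ := hK
  obtain ⟨h₁', h₂', h₃', h₄', h₅', h₆'⟩ := hK'
  refine ⟨?_, ?_, ?_, ?_, ?_, ?_⟩ <;> intros <;> simp only [*] <;> ring

theorem div_const (hK : Trilinear K) (s : ℝ) : Trilinear fun a b c => K a b c / s := by
  obtain ⟨h₁, h₂, h₃, h₄, h₅, h₆⟩ := hK
  refine ⟨?_, ?_, ?_, ?_, ?_, ?_⟩ <;> intros <;> simp only [*] <;> ring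

end Trilinear

section SkewSymmetrisation

variable {α : Type*}

def IsSkew₁₂ (L : α → α → α → ℝ) : Prop := ∀ a b c, L a b c = -L b a c

def IsSkew₂₃ (K : α → α → α → ℝ) : Prop := ∀ a b c, K a b c = -K a c b

noncomputable def skewSymmetrize₁₂ (K : α → α → α → ℝ) : α → α → α → ℝ :=
  fun a b c => (K a b c - K b a c) / 2

def skewSymmetrize₁₂Inv (L : α → α → α → ℝ) : α → α → α → ℝ :=
  fun a b c => L a b c - L b c a + L c a b

theorem isSkew₁₂_skewSymmetrize₁₂ (K : α → α → α → ℝ) : IsSkew₁₂ (skewSymmetrize₁₂ K) :=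
  fun a b c => by simp only [skewSymmetrize₁₂]; ring

theorem isSkew₂₃_skewSymmetrize₁₂Inv {L : α → α → α → ℝ} (hL : IsSkew₁₂ L) :
    IsSkew₂₃ (skewSymmetrize₁₂Inv L) := fun a b c => by
  simp only [skewSymmetrize₁₂Inv]
  linarith [hL a c b, hL b c a, hL b a c]

theorem skewSymmetrize₁₂_skewSymmetrize₁₂Inv {L : α → α → α → ℝ} (hL : IsSkew₁₂ L) :
    skewSymmetrize₁₂ (skewSymmetrize₁₂Inv L) = L := by
  funext a b c
  simp only [skewSymmetrize₁₂, skewSymmetrize₁₂Inv]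
  linarith [hL b a c, hL a c b, hL c b a]

theorem skewSymmetrize₁₂Inv_skewSymmetrize₁₂ {K : α → α → α → ℝ} (hK : IsSkew₂₃ K) :
    skewSymmetrize₁₂Inv (skewSymmetrize₁₂ K) = K := by
  funext a b c
  simp only [skewSymmetrize₁₂, skewSymmetrize₁₂Inv]
  linarith [hK a b c, hK b a c, hK c a b]

end SkewSymmetrisation

theorem Trilinear.skewSymmetrize₁₂ {V : Type*} [AddCommGroup V] [Module ℝ V]
    {K : V → V → V → ℝ} (hK : Trilinear K) : Trilinear (skewSymmetrize₁₂ K) :=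
  (hK.sub hK.swap₁₂).div_const 2

theorem Trilinear.skewSymmetrize₁₂Inv {V : Type*} [AddCommGroup V] [Module ℝ V]
    {L : V → V → V → ℝ} (hL : Trilinear L) : Trilinear (skewSymmetrize₁₂Inv L) :=
  (hL.sub hL.rotate).add hL.rotate.rotate

theorem stmt0_general {V : Type*} [AddCommGroup V] [Module ℝ V] :
    (∀ K : V → V → V → ℝ, Trilinear K → (∀ a b c, K a b c = - K a c b) →
      (Trilinear (fun a b c => (K a b c - K b a c) / 2) ∧
        ∀ a b c, (K a b c - K b a c) / 2 = - ((K b a c - K a b c) / 2))) ∧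
    (∀ L : V → V → V → ℝ, Trilinear L → (∀ a b c, L a b c = - L b a c) →
      ∃! K : V → V → V → ℝ,
        (Trilinear K ∧ (∀ a b c, K a b c = - K a c b)) ∧
        (fun a b c => (K a b c - K b a c) / 2) = L) := by
  refine ⟨fun K hK _ => ⟨hK.skewSymmetrize₁₂, isSkew₁₂_skewSymmetrize₁₂ K⟩, fun L hL hL₁₂ => ?_⟩
  refine ⟨skewSymmetrize₁₂Inv L,
    ⟨⟨hL.skewSymmetrize₁₂Inv, isSkew₂₃_skewSymmetrize₁₂Inv hL₁₂⟩,
      skewSymmetrize₁₂_skewSymmetrize₁₂Inv hL₁₂⟩, ?_⟩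
  rintro K ⟨⟨-, hK₂₃⟩, hKL⟩
  calc K = skewSymmetrize₁₂Inv (skewSymmetrize₁₂ K) :=
        (skewSymmetrize₁₂Inv_skewSymmetrize₁₂ hK₂₃).symm
    _ = skewSymmetrize₁₂Inv L := congrArg _ hKL

/-- The linear map `Λ¹⊗Λ² → Λ²⊗Λ¹`, sending a trilinear form `K` skew in its last
two arguments to its skew-symmetrisation `K_{[ab]c}` over the first two arguments,
is a linear isomorphism: it maps into the trilinear forms skew in the first two
arguments, and every such form has a unique preimage. -/
theorem stmt0 {V : Type*} [AddCommGroup V] [Module ℝ V] [FiniteDimensional ℝ V] :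
    (∀ K : V → V → V → ℝ, Trilinear K → (∀ a b c, K a b c = - K a c b) →
      (Trilinear (fun a b c => (K a b c - K b a c) / 2) ∧
        ∀ a b c, (K a b c - K b a c) / 2 = - ((K b a c - K a b c) / 2))) ∧
    (∀ L : V → V → V → ℝ, Trilinear L → (∀ a b c, L a b c = - L b a c) →
      ∃! K : V → V → V → ℝ,
        (Trilinear K ∧ (∀ a b c, K a b c = - K a c b)) ∧
        (fun a b c => (K a b c - K b a c) / 2) = L) :=
  stmt0_general
end

section
/- Let U ⊆ ℝⁿ be open with vanishing first de Rham cohomology. A smooth symmetric 2-tensor ω_{ab} on U is of the form ω_{ab} = ∂_{(a}X_{b)} for some 1-form X on U if and only if ∂_a∂_c ω_{bd} − ∂_b∂_c ω_{ad} − ∂_a∂_d ω_{bc} + ∂_b∂_d ω_{ac} = 0 for all indices a,b,c,d. -/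
/-- Coordinate partial derivative `∂ᵢ f` of a scalar function on `ℝⁿ`. -/
noncomputable def pd {n : ℕ} (i : Fin n) (f : (Fin n → ℝ) → ℝ) : (Fin n → ℝ) → ℝ :=
  fun x => fderiv ℝ f x (Pi.single i 1)

open Filter Topology

namespace StVenantAux

variable {n : ℕ} {U : Set (Fin n → ℝ)}

lemma pd_congrOn (hU : IsOpen U) {f g : (Fin n → ℝ) → ℝ}
    (h : ∀ y ∈ U, f y = g y) {x : Fin n → ℝ} (hx : x ∈ U) (i : Fin n) :
    pd i f x = pd i g x := by
  unfold pd
  rw [Filter.EventuallyEq.fderiv_eq (Filter.eventuallyEq_of_mem (hU.mem_nhds hx) h)]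

lemma diffAt (hU : IsOpen U) {f : (Fin n → ℝ) → ℝ} (hf : ContDiffOn ℝ (⊤ : ℕ∞) f U)
    {x : Fin n → ℝ} (hx : x ∈ U) : DifferentiableAt ℝ f x :=
  (hf.contDiffAt (hU.mem_nhds hx)).differentiableAt (by simp)

lemma pd_contDiffOn (hU : IsOpen U) {f : (Fin n → ℝ) → ℝ} (hf : ContDiffOn ℝ (⊤ : ℕ∞) f U)
    (i : Fin n) : ContDiffOn ℝ (⊤ : ℕ∞) (pd i f) U := by
  have h1 : ContDiffOn ℝ (⊤ : ℕ∞) (fun y => fderiv ℝ f y) U :=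
    hf.fderiv_of_isOpen hU (by simp)
  exact h1.clm_apply contDiffOn_const

lemma pd_add {f g : (Fin n → ℝ) → ℝ} {x : Fin n → ℝ}
    (hf : DifferentiableAt ℝ f x) (hg : DifferentiableAt ℝ g x) (i : Fin n) :
    pd i (fun y => f y + g y) x = pd i f x + pd i g x := by
  unfold pd; rw [fderiv_fun_add hf hg]; simp

lemma pd_sub {f g : (Fin n → ℝ) → ℝ} {x : Fin n → ℝ}
    (hf : DifferentiableAt ℝ f x) (hg : DifferentiableAt ℝ g x) (i : Fin n) :
    pd i (fun y => f y - g y) x = pd i f x - pd i g x := by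
  unfold pd; rw [fderiv_fun_sub hf hg]; simp

lemma pd_div2 {f : (Fin n → ℝ) → ℝ} {x : Fin n → ℝ}
    (hf : DifferentiableAt ℝ f x) (i : Fin n) :
    pd i (fun y => f y / 2) x = pd i f x / 2 := by
  have h : (fun y => f y / 2) = fun y => (2:ℝ)⁻¹ • f y := by
    funext y; simp [smul_eq_mul]; ring
  unfold pd
  rw [h, fderiv_fun_const_smul hf ((2:ℝ)⁻¹)]
  simp [smul_eq_mul]; ring

lemma pd_comm (hU : IsOpen U) {f : (Fin n → ℝ) → ℝ} (hf : ContDiffOn ℝ (⊤ : ℕ∞) f U)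
    {x : Fin n → ℝ} (hx : x ∈ U) (a b : Fin n) :
    pd a (pd b f) x = pd b (pd a f) x := by
  have hev : ∀ᶠ y in 𝓝 x, HasFDerivAt f (fderiv ℝ f y) y := by
    filter_upwards [hU.mem_nhds hx] with y hy
    exact (diffAt hU hf hy).hasFDerivAt
  have hf' : DifferentiableAt ℝ (fderiv ℝ f) x := by
    have := (hf.contDiffAt (hU.mem_nhds hx)).fderiv_right (m := (⊤ : ℕ∞)) (by simp)
    exact this.differentiableAt (by simp)
  have key : ∀ i j : Fin n, pd i (pd j f) x =
      fderiv ℝ (fderiv ℝ f) x (Pi.single i 1) (Pi.single j 1) := by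
    intro i j
    have hcomp0 := HasFDerivAt.comp x
      ((ContinuousLinearMap.apply ℝ ℝ (Pi.single j 1) :
        ((Fin n → ℝ) →L[ℝ] ℝ) →L[ℝ] ℝ).hasFDerivAt (x := fderiv ℝ f x))
      hf'.hasFDerivAt
    have hcomp : HasFDerivAt (fun y => fderiv ℝ f y (Pi.single j 1))
        ((ContinuousLinearMap.apply ℝ ℝ (Pi.single j 1)).comp
          (fderiv ℝ (fderiv ℝ f) x)) x := hcomp0
    show fderiv ℝ (fun y => fderiv ℝ f y (Pi.single j 1)) x (Pi.single i 1) = _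
    rw [hcomp.fderiv]
    rfl
  rw [key a b, key b a]
  exact second_derivative_symmetric_of_eventually hev hf'.hasFDerivAt _ _

lemma pd2_congrOn (hU : IsOpen U) {f g : (Fin n → ℝ) → ℝ}
    (h : ∀ y ∈ U, f y = g y) {x : Fin n → ℝ} (hx : x ∈ U) (a c : Fin n) :
    pd a (pd c f) x = pd a (pd c g) x :=
  pd_congrOn hU (fun y hy => pd_congrOn hU h hy c) hx a

/-- swap the inner two derivatives of a third derivative -/
lemma pd_swap23 (hU : IsOpen U) {f : (Fin n → ℝ) → ℝ} (hf : ContDiffOn ℝ (⊤ : ℕ∞) f U)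
    {x : Fin n → ℝ} (hx : x ∈ U) (a b c : Fin n) :
    pd a (pd b (pd c f)) x = pd a (pd c (pd b f)) x :=
  pd_congrOn hU (fun y hy => pd_comm hU hf hy b c) hx a

/-- swap the outer and innermost derivatives of a third derivative -/
lemma pd_swap13 (hU : IsOpen U) {f : (Fin n → ℝ) → ℝ} (hf : ContDiffOn ℝ (⊤ : ℕ∞) f U)
    {x : Fin n → ℝ} (hx : x ∈ U) (a b c : Fin n) :
    pd a (pd b (pd c f)) x = pd c (pd b (pd a f)) x := by
  rw [pd_comm hU (pd_contDiffOn hU hf c) hx a b]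
  rw [pd_congrOn hU (fun y hy => pd_comm hU hf hy a c) hx b]
  rw [pd_comm hU (pd_contDiffOn hU hf a) hx b c]

end StVenantAux

open StVenantAux in
/-- Let `U ⊆ ℝⁿ` be open with vanishing first de Rham cohomology (expressed by the
hypothesis `hH1`: every smooth closed 1-form on `U` is exact).  A smooth symmetric
2-tensor `ω` on `U` is of the form `ω_{ab} = ∂_{(a}X_{b)}` for some 1-form `X` on `U`
iff the Saint-Venant compatibility condition
`∂_a∂_c ω_{bd} − ∂_b∂_c ω_{ad} − ∂_a∂_d ω_{bc} + ∂_b∂_d ω_{ac} = 0` holds on `U`. -/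
theorem stmt9 (n : ℕ) (U : Set (Fin n → ℝ)) (hUopen : IsOpen U)
    (hH1 : ∀ α : (Fin n → ℝ) → Fin n → ℝ,
      (∀ a, ContDiffOn ℝ (⊤ : ℕ∞) (fun x => α x a) U) →
      (∀ x ∈ U, ∀ a b, pd a (fun y => α y b) x = pd b (fun y => α y a) x) →
      ∃ f : (Fin n → ℝ) → ℝ, ContDiffOn ℝ (⊤ : ℕ∞) f U ∧ ∀ x ∈ U, ∀ a, pd a f x = α x a)
    (ω : (Fin n → ℝ) → Fin n → Fin n → ℝ)
    (hω : ∀ a b, ContDiffOn ℝ (⊤ : ℕ∞) (fun x => ω x a b) U)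
    (hωsym : ∀ x a b, ω x a b = ω x b a) :
    (∃ X : (Fin n → ℝ) → Fin n → ℝ,
      (∀ a, ContDiffOn ℝ (⊤ : ℕ∞) (fun x => X x a) U) ∧
      ∀ x ∈ U, ∀ a b,
        ω x a b = (pd a (fun y => X y b) x + pd b (fun y => X y a) x) / 2) ↔
    (∀ x ∈ U, ∀ a b c d,
      pd a (pd c fun y => ω y b d) x - pd b (pd c fun y => ω y a d) x
        - pd a (pd d fun y => ω y b c) x + pd b (pd d fun y => ω y a c) x = 0) := by
  constructor
  · -- forward direction
    rintro ⟨X, hXs, hXeq⟩ x hx a b c d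
    -- second derivatives of ω in terms of third derivatives of X
    have key : ∀ p q r s : Fin n,
        pd p (pd q fun y => ω y r s) x =
          (pd p (pd q (pd r fun y => X y s)) x
            + pd p (pd q (pd s fun y => X y r)) x) / 2 := by
      intro p q r s
      have h1 : pd p (pd q fun y => ω y r s) x =
          pd p (pd q fun y =>
            (pd r (fun z => X z s) y + pd s (fun z => X z r) y) / 2) x :=
        pd2_congrOn hUopen (fun y hy => hXeq y hy r s) hx p q
      rw [h1]
      have h2 : pd p (pd q fun y =>
            (pd r (fun z => X z s) y + pd s (fun z => X z r) y) / 2) x =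
          pd p (fun y =>
            (pd q (pd r fun z => X z s) y + pd q (pd s fun z => X z r) y) / 2) x := by
        refine pd_congrOn hUopen (fun y hy => ?_) hx p
        rw [pd_div2 (((pd_contDiffOn hUopen (hXs s) r).add
              (pd_contDiffOn hUopen (hXs r) s)).differentiableOn (by simp) |>.differentiableAt
              (hUopen.mem_nhds hy)) q]
        rw [pd_add (diffAt hUopen (pd_contDiffOn hUopen (hXs s) r) hy)
              (diffAt hUopen (pd_contDiffOn hUopen (hXs r) s) hy) q]
      rw [h2]
      rw [pd_div2 (diffAt hUopen ((pd_contDiffOn hUopen (pd_contDiffOn hUopen (hXs s) r) q).add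
            (pd_contDiffOn hUopen (pd_contDiffOn hUopen (hXs r) s) q)) hx) p]
      rw [pd_add (diffAt hUopen (pd_contDiffOn hUopen (pd_contDiffOn hUopen (hXs s) r) q) hx)
            (diffAt hUopen (pd_contDiffOn hUopen (pd_contDiffOn hUopen (hXs r) s) q) hx) p]
    rw [key a c b d, key b c a d, key a d b c, key b d a c]
    have e1 : pd b (pd c (pd a fun y => X y d)) x = pd a (pd c (pd b fun y => X y d)) x :=
      pd_swap13 hUopen (hXs d) hx b c a
    have e2 : pd a (pd d (pd c fun y => X y b)) x = pd a (pd c (pd d fun y => X y b)) x :=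
      pd_swap23 hUopen (hXs b) hx a d c
    have e3 : pd b (pd d (pd c fun y => X y a)) x = pd b (pd c (pd d fun y => X y a)) x :=
      pd_swap23 hUopen (hXs a) hx b d c
    have e4 : pd b (pd d (pd a fun y => X y c)) x = pd a (pd d (pd b fun y => X y c)) x :=
      pd_swap13 hUopen (hXs c) hx b d a
    rw [e1, e2, e3, e4]
    ring
  · -- reverse direction
    intro hsv
    -- step 1: build σ a b with ∂_c σ_{ab} = ∂_b ω_{ac} - ∂_a ω_{bc}
    have hσex : ∀ a b : Fin n, ∃ s : (Fin n → ℝ) → ℝ, ContDiffOn ℝ (⊤ : ℕ∞) s U ∧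
        ∀ x ∈ U, ∀ c, pd c s x =
          pd b (fun y => ω y a c) x - pd a (fun y => ω y b c) x := by
      intro a b
      apply hH1 (fun x c => pd b (fun y => ω y a c) x - pd a (fun y => ω y b c) x)
      · intro c
        exact (pd_contDiffOn hUopen (hω a c) b).sub (pd_contDiffOn hUopen (hω b c) a)
      · intro x hx c d
        have hc : pd c (fun x => pd b (fun y => ω y a d) x - pd a (fun y => ω y b d) x) x
            = pd c (pd b fun y => ω y a d) x - pd c (pd a fun y => ω y b d) x :=
          pd_sub (diffAt hUopen (pd_contDiffOn hUopen (hω a d) b) hx)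
            (diffAt hUopen (pd_contDiffOn hUopen (hω b d) a) hx) c
        have hd : pd d (fun x => pd b (fun y => ω y a c) x - pd a (fun y => ω y b c) x) x
            = pd d (pd b fun y => ω y a c) x - pd d (pd a fun y => ω y b c) x :=
          pd_sub (diffAt hUopen (pd_contDiffOn hUopen (hω a c) b) hx)
            (diffAt hUopen (pd_contDiffOn hUopen (hω b c) a) hx) d
        rw [hc, hd]
        rw [pd_comm hUopen (hω a d) hx c b, pd_comm hUopen (hω b d) hx c a,
            pd_comm hUopen (hω a c) hx d b, pd_comm hUopen (hω b c) hx d a]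
        have := hsv x hx a b c d
        linarith
    choose σ hσs hσp using hσex
    -- antisymmetrize
    set τ : Fin n → Fin n → (Fin n → ℝ) → ℝ :=
      fun a b x => (σ a b x - σ b a x) / 2 with hτdef
    have hτs : ∀ a b, ContDiffOn ℝ (⊤ : ℕ∞) (τ a b) U := by
      intro a b
      exact ((hσs a b).sub (hσs b a)).div_const 2
    have hτp : ∀ a b, ∀ x ∈ U, ∀ c, pd c (τ a b) x =
        pd b (fun y => ω y a c) x - pd a (fun y => ω y b c) x := by
      intro a b x hx c
      have h1 : pd c (τ a b) x = (pd c (fun y => σ a b y - σ b a y) x) / 2 := by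
        apply pd_div2 (diffAt hUopen ((hσs a b).sub (hσs b a)) hx)
      rw [h1, pd_sub (diffAt hUopen (hσs a b) hx) (diffAt hUopen (hσs b a) hx) c,
        hσp a b x hx c, hσp b a x hx c]
      ring
    -- step 2: build X b with ∂_c X_b = ω_{bc} + τ_{bc}
    have hXex : ∀ b : Fin n, ∃ f : (Fin n → ℝ) → ℝ, ContDiffOn ℝ (⊤ : ℕ∞) f U ∧
        ∀ x ∈ U, ∀ c, pd c f x = ω x b c + τ b c x := by
      intro b
      apply hH1 (fun x c => ω x b c + τ b c x)
      · intro c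
        exact (hω b c).add (hτs b c)
      · intro x hx c d
        have hc : pd c (fun x => ω x b d + τ b d x) x
            = pd c (fun y => ω y b d) x + pd c (τ b d) x :=
          pd_add (diffAt hUopen (hω b d) hx) (diffAt hUopen (hτs b d) hx) c
        have hd : pd d (fun x => ω x b c + τ b c x) x
            = pd d (fun y => ω y b c) x + pd d (τ b c) x :=
          pd_add (diffAt hUopen (hω b c) hx) (diffAt hUopen (hτs b c) hx) d
        rw [hc, hd, hτp b d x hx c, hτp b c x hx d]
        have hsymfun : (fun y => ω y c d) = (fun y => ω y d c) := by
          funext y; exact hωsym y c d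
        rw [show pd b (fun y => ω y c d) x = pd b (fun y => ω y d c) x by rw [hsymfun]]
        ring
    choose Xf hXfs hXfp using hXex
    refine ⟨fun x b => Xf b x, fun b => hXfs b, ?_⟩
    intro x hx a b
    have h1 : pd a (fun y => Xf b y) x = ω x b a + τ b a x := hXfp b x hx a
    have h2 : pd b (fun y => Xf a y) x = ω x a b + τ a b x := hXfp a x hx b
    simp only [h1, h2]
    rw [hωsym x b a]
    simp only [hτdef]
    ring
end

section
/- For the Koszul differential ∂ on Λ•⊗T with T = Λ¹ ⊕ Λ², the first cohomology H¹(Λ•⊗T,∂) = ker(∂: Λ¹⊗T → Λ²⊗T)/im(∂: T → Λ¹⊗T) is isomorphic as a GL(n,ℝ)-module to the space of symmetric 2-tensors Sym²(ℝⁿ)*. -/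
/-!
A closed cochain `(Y, L)` has `L` symmetric in its first two slots and skew in its last two;
such a 3-tensor vanishes, since the two symmetries generate all of `S₃` and force `L = -L`.
So `(Y, L)` is exact exactly when `Y` is skew, i.e. when its symmetric part vanishes, while
`(S, 0)` is a closed cochain with symmetric part `S` for every symmetric `S`.
-/

theorem eq_zero_of_symm_left_of_skew_right {ι M : Type*} [AddCommGroup M] [IsAddTorsionFree M]
    {L : ι → ι → ι → M} (hskew : ∀ a b c, L a b c = -L a c b)
    (hsymm : ∀ a b c, L a b c = L b a c) : L = 0 := by
  funext a b c
  refine self_eq_neg.mp ?_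
  calc L a b c = L b a c := hsymm a b c
    _ = -L b c a := hskew b a c
    _ = -L c b a := by rw [hsymm b c a]
    _ = L c a b := by rw [hskew c b a, neg_neg]
    _ = L a c b := hsymm c a b
    _ = -L a b c := hskew a c b

theorem symmPart_eq_zero_iff {ι K : Type*} [DivisionRing K] [NeZero (2 : K)] {Y : ι → ι → K} :
    (∀ a b, (Y a b + Y b a) / 2 = 0) ↔ ∀ a b, Y a b = -Y b a := by
  simp only [div_eq_zero_iff, two_ne_zero, or_false, add_eq_zero_iff_eq_neg]

/-- `H¹(Λ•⊗T, ∂) ≅ Sym²(ℝⁿ)*` for the Koszul differential on `Λ•⊗T`, `T = Λ¹⊕Λ²`.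
An element of `Λ¹⊗T` is a pair `(Y,L)` with `Y_{ab}` and `L_{abc}` skew in `b,c`;
`∂(Y,L) = ((a,b) ↦ (L_{[ab]c}, 0))` and `∂(X,K) = (a ↦ (K_{a·},0))`.  The claim:
the GL(n,ℝ)-equivariant map sending a `∂`-closed `(Y,L)` to the symmetric part of `Y`
vanishes exactly on the image of `∂ : T → Λ¹⊗T`, and hits every symmetric 2-tensor,
identifying `ker/im` with `Sym²(ℝⁿ)*`. -/
theorem stmt11 (n : ℕ) :
    (∀ (Y : Fin n → Fin n → ℝ) (L : Fin n → Fin n → Fin n → ℝ),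
      (∀ a b c, L a b c = - L a c b) →
      (∀ a b c, (L a b c - L b a c) / 2 = 0) →
      ((∀ a b, (Y a b + Y b a) / 2 = 0) ↔
        ∃ (X : Fin n → ℝ) (K : Fin n → Fin n → ℝ),
          (∀ a b, K a b = - K b a) ∧ (∀ a b, Y a b = K a b) ∧ L = 0)) ∧
    (∀ S : Fin n → Fin n → ℝ, (∀ a b, S a b = S b a) →
      ∃ (Y : Fin n → Fin n → ℝ) (L : Fin n → Fin n → Fin n → ℝ),
        (∀ a b c, L a b c = - L a c b) ∧
        (∀ a b c, (L a b c - L b a c) / 2 = 0) ∧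
        (∀ a b, (Y a b + Y b a) / 2 = S a b)) := by
  refine ⟨fun Y L hskew hclosed => ?_, fun S hS => ?_⟩
  · have hL : L = 0 := eq_zero_of_symm_left_of_skew_right hskew fun a b c =>
      sub_eq_zero.mp ((div_eq_zero_iff.mp (hclosed a b c)).resolve_right two_ne_zero)
    rw [symmPart_eq_zero_iff]
    exact ⟨fun hY => ⟨0, Y, hY, fun _ _ => rfl, hL⟩,
      fun ⟨_, K, hK, hYK, _⟩ a b => by rw [hYK, hYK, hK]⟩
  · refine ⟨S, 0, fun _ _ _ => by simp, fun _ _ _ => by simp, fun a b => ?_⟩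
    rw [← hS a b, add_self_div_two]
end

section
/- On flat ℝⁿ, every Killing tensor of valence ℓ (a symmetric ℓ-tensor field X with ∂_{(a}X_{bc⋯de)} = 0) is a polynomial of degree at most ℓ in the coordinates. In particular for ℓ = 2: a smooth symmetric 2-tensor field X_{bc} on ℝⁿ with ∂_{(a}X_{bc)} = 0 has all partial derivatives of order 3 vanishing. -/
/-- Iterated coordinate partial derivative along a list of indices. -/
noncomputable def pdList {n : ℕ} (l : List (Fin n)) (f : (Fin n → ℝ) → ℝ) :
    (Fin n → ℝ) → ℝ :=
  l.foldr (fun i g => pd i g) f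

variable {n : ℕ}



lemma pd_contDiff {f : (Fin n → ℝ) → ℝ} (hf : ContDiff ℝ (⊤ : ℕ∞) f) (i : Fin n) :
    ContDiff ℝ (⊤ : ℕ∞) (pd i f) :=
  (hf.fderiv_right (by simp)).clm_apply contDiff_const

lemma pd_comm {f : (Fin n → ℝ) → ℝ} (hf : ContDiff ℝ (⊤ : ℕ∞) f) (i j : Fin n) :
    pd i (pd j f) = pd j (pd i f) := by
  funext x
  have hd : Differentiable ℝ (fderiv ℝ f) := by
    have := hf.fderiv_right (m := (⊤ : ℕ∞)) (by simp)
    exact this.differentiable (by simp)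
  have hsymm : IsSymmSndFDerivAt ℝ f x := by
    apply ContDiffAt.isSymmSndFDerivAt (n := (⊤ : ℕ∞)) hf.contDiffAt
    rw [minSmoothness_of_isRCLikeNormedField]; exact WithTop.coe_le_coe.mpr (le_top : (2 : ℕ∞) ≤ ⊤)
  have e1 : fderiv ℝ (pd j f) x (Pi.single i 1)
      = fderiv ℝ (fderiv ℝ f) x (Pi.single i 1) (Pi.single j 1) := by
    unfold pd
    rw [fderiv_clm_apply (hd x) (differentiableAt_const _)]; simp
  have e2 : fderiv ℝ (pd i f) x (Pi.single j 1)
      = fderiv ℝ (fderiv ℝ f) x (Pi.single j 1) (Pi.single i 1) := by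
    unfold pd
    rw [fderiv_clm_apply (hd x) (differentiableAt_const _)]; simp
  show fderiv ℝ (pd j f) x (Pi.single i 1) = fderiv ℝ (pd i f) x (Pi.single j 1)
  rw [e1, e2, hsymm]

lemma pdList_cons (i : Fin n) (l : List (Fin n)) (f : (Fin n → ℝ) → ℝ) :
    pdList (i :: l) f = pd i (pdList l f) := rfl

lemma pdList_contDiff {f : (Fin n → ℝ) → ℝ} (hf : ContDiff ℝ (⊤ : ℕ∞) f) (l : List (Fin n)) :
    ContDiff ℝ (⊤ : ℕ∞) (pdList l f) := by
  induction l with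
  | nil => exact hf
  | cons i l ih => exact pd_contDiff ih i

lemma pdList_append (l₁ l₂ : List (Fin n)) (f : (Fin n → ℝ) → ℝ) :
    pdList (l₁ ++ l₂) f = pdList l₁ (pdList l₂ f) := by
  simp [pdList, List.foldr_append]

lemma pdList_perm {f : (Fin n → ℝ) → ℝ} (hf : ContDiff ℝ (⊤ : ℕ∞) f) {l₁ l₂ : List (Fin n)}
    (h : l₁.Perm l₂) : pdList l₁ f = pdList l₂ f := by
  induction h with
  | nil => rfl
  | cons a h ih => rw [pdList_cons, pdList_cons, ih]
  | swap a b l => rw [pdList_cons, pdList_cons, pdList_cons, pdList_cons,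
      pd_comm (pdList_contDiff hf l)]
  | trans h₁ h₂ ih₁ ih₂ => rw [ih₁, ih₂]

lemma pd_zero (i : Fin n) : pd i (fun _ => (0:ℝ)) = fun _ => 0 := by
  funext x; simp [pd]

lemma pdList_zero (l : List (Fin n)) : pdList l (fun _ => (0:ℝ)) = fun _ => 0 := by
  induction l with
  | nil => rfl
  | cons i l ih => rw [pdList_cons, ih, pd_zero]

lemma pd_add {f g : (Fin n → ℝ) → ℝ} (hf : ContDiff ℝ (⊤ : ℕ∞) f) (hg : ContDiff ℝ (⊤ : ℕ∞) g) (i : Fin n) :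
    pd i (fun y => f y + g y) = fun x => pd i f x + pd i g x := by
  funext x
  simp only [pd]
  rw [fderiv_fun_add (hf.differentiable (by simp) x) (hg.differentiable (by simp) x)]
  simp

lemma pdList_add {f g : (Fin n → ℝ) → ℝ} (hf : ContDiff ℝ (⊤ : ℕ∞) f) (hg : ContDiff ℝ (⊤ : ℕ∞) g)
    (l : List (Fin n)) :
    pdList l (fun y => f y + g y) = fun x => pdList l f x + pdList l g x := by
  induction l with
  | nil => rfl
  | cons i l ih =>
    rw [pdList_cons, ih, pd_add (pdList_contDiff hf l) (pdList_contDiff hg l)]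
    rfl

lemma pdList_sum {k : ℕ} {g : Fin k → (Fin n → ℝ) → ℝ} (hg : ∀ j, ContDiff ℝ (⊤ : ℕ∞) (g j))
    (l : List (Fin n)) :
    pdList l (fun y => ∑ j, g j y) = fun x => ∑ j, pdList l (g j) x := by
  induction k with
  | zero => simp [pdList_zero]
  | succ k ih =>
    have e : (fun y => ∑ j, g j y) = fun y => g 0 y + ∑ j : Fin k, g j.succ y := by
      funext y; rw [Fin.sum_univ_succ]
    rw [e, pdList_add (hg 0) (by exact ContDiff.sum fun j _ => hg j.succ) l,
      ih (fun j => hg j.succ)]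
    funext x; rw [Fin.sum_univ_succ]


/-- Multiset of values of a tuple. -/
def msOf {k : ℕ} (m : Fin k → Fin n) : Multiset (Fin n) := (List.ofFn m : List (Fin n))

lemma msOf_eq_sum {k : ℕ} (m : Fin k → Fin n) : msOf m = ∑ i, {m i} := by
  induction k with
  | zero => simp [msOf]
  | succ k ih =>
    have : ∑ i : Fin k, ({m i.succ} : Multiset (Fin n)) = msOf (m ∘ Fin.succ) :=
      (ih (m ∘ Fin.succ)).symm
    rw [Fin.sum_univ_succ, this]
    simp [msOf, List.ofFn_succ]
    rfl

lemma card_msOf {k : ℕ} (m : Fin k → Fin n) : Multiset.card (msOf m) = k := by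
  simp [msOf]

lemma msOf_succAbove {k : ℕ} (m : Fin (k+1) → Fin n) (i : Fin (k+1)) :
    msOf m = m i ::ₘ msOf (m ∘ i.succAbove) := by
  rw [msOf_eq_sum, msOf_eq_sum, Fin.sum_univ_succAbove _ i]
  rfl

lemma mem_msOf {k : ℕ} (m : Fin k → Fin n) (a : Fin n) : a ∈ msOf m ↔ ∃ i, m i = a := by
  simp [msOf, List.mem_ofFn, Set.mem_range]

/-- Tuples with equal multisets of values differ by a permutation. -/
lemma exists_perm_of_msOf_eq : ∀ {k : ℕ} (m₁ m₂ : Fin k → Fin n), msOf m₁ = msOf m₂ →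
    ∃ σ : Equiv.Perm (Fin k), m₂ = m₁ ∘ σ := by
  intro k
  induction k with
  | zero => intro m₁ m₂ _; exact ⟨1, by funext i; exact absurd i.2 (by omega)⟩
  | succ k ih =>
    intro m₁ m₂ h
    have h0 : m₂ 0 ∈ msOf m₁ := by rw [h, mem_msOf]; exact ⟨0, rfl⟩
    obtain ⟨i, hi⟩ := (mem_msOf m₁ (m₂ 0)).1 h0
    have hrest : msOf (m₁ ∘ i.succAbove) = msOf (m₂ ∘ Fin.succ) := by
      have e1 := msOf_succAbove m₁ i
      have e2 := msOf_succAbove m₂ 0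
      have e2' : msOf m₂ = m₂ 0 ::ₘ msOf (m₂ ∘ Fin.succ) := by
        rw [e2]
        have : m₂ ∘ Fin.succAbove 0 = m₂ ∘ Fin.succ := by
          funext j; simp [Fin.succAbove_zero]
        rw [this]
      rw [e1, e2', hi] at h
      exact (Multiset.cons_inj_right (m₂ 0)).mp h
    obtain ⟨σ', hσ'⟩ := ih _ _ hrest
    -- build σ : 0 ↦ i, succ j ↦ i.succAbove (σ' j)
    let f : Fin (k+1) → Fin (k+1) := fun j => Fin.cases i (fun j' => i.succAbove (σ' j')) j
    have hinj : Function.Injective f := by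
      intro a b hab
      induction a using Fin.cases with
      | zero =>
        induction b using Fin.cases with
        | zero => rfl
        | succ b' => exact absurd hab.symm (Fin.succAbove_ne i (σ' b'))
      | succ a' =>
        induction b using Fin.cases with
        | zero => exact absurd hab (Fin.succAbove_ne i (σ' a'))
        | succ b' =>
          have h1 := Fin.succAbove_right_injective (p := i) hab
          have h2 := σ'.injective h1
          have h3 : a' = b' := by simpa [Fin.ext_iff] using h2
          rw [h3]
    let σ : Equiv.Perm (Fin (k+1)) := Equiv.ofBijective f (Finite.injective_iff_bijective.mp hinj)
    refine ⟨σ, funext fun j => ?_⟩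
    induction j using Fin.cases with
    | zero =>
      show m₂ 0 = m₁ (f 0)
      simp only [f, Fin.cases_zero]
      exact hi.symm
    | succ j' =>
      show m₂ j'.succ = m₁ (f j'.succ)
      simp only [f, Fin.cases_succ]
      have := congrFun hσ' j'
      simpa using this


/-- "Raising" operator: move one index from the second group to the first. -/
def Eop (v : Multiset (Fin n) → Multiset (Fin n) → ℝ) (A B : Multiset (Fin n)) : ℝ :=
  (B.map (fun b => v (b ::ₘ A) (B.erase b))).sum

/-- "Lowering" operator: move one index from the first group to the second. -/
def Fop (v : Multiset (Fin n) → Multiset (Fin n) → ℝ) (A B : Multiset (Fin n)) : ℝ :=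
  (A.map (fun a => v (A.erase a) (a ::ₘ B))).sum

lemma erase_cons_of_mem {α : Type*} [DecidableEq α] {a : α} (b : α) {A : Multiset α}
    (h : a ∈ A) : (b ::ₘ A).erase a = b ::ₘ A.erase a := by
  by_cases hab : a = b
  · subst hab; rw [Multiset.erase_cons_head, Multiset.cons_erase h]
  · exact Multiset.erase_cons_tail A (fun he => hab he.symm)

lemma sum_map_swap {α : Type*} (A B : Multiset α) (f : α → α → ℝ) :
    (B.map (fun b => (A.map (fun a => f a b)).sum)).sum
      = (A.map (fun a => (B.map (fun b => f a b)).sum)).sum := by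
  induction A using Multiset.induction with
  | empty => simp
  | cons a A ih => simp [Multiset.sum_map_add, ih]

/-- The key sl₂ commutator identity, valid for arbitrary `v`. -/
lemma EF_commutator (v : Multiset (Fin n) → Multiset (Fin n) → ℝ) (A B : Multiset (Fin n)) :
    Eop (Fop v) A B + (Multiset.card A : ℝ) * v A B
      = Fop (Eop v) A B + (Multiset.card B : ℝ) * v A B := by
  have hE : Eop (Fop v) A B
      = (B.map (fun b => v A B)).sum
        + (B.map (fun b => (A.map (fun a => v (b ::ₘ A.erase a) (a ::ₘ B.erase b))).sum)).sum := by
    rw [Eop, ← Multiset.sum_map_add]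
    apply congrArg
    apply Multiset.map_congr rfl
    intro b hb
    rw [Fop, Multiset.map_cons, Multiset.sum_cons, Multiset.erase_cons_head,
      Multiset.cons_erase hb]
    apply congrArg
    apply congrArg
    apply Multiset.map_congr rfl
    intro a ha
    rw [erase_cons_of_mem b ha]
  have hF : Fop (Eop v) A B
      = (A.map (fun a => v A B)).sum
        + (A.map (fun a => (B.map (fun b => v (b ::ₘ A.erase a) (a ::ₘ B.erase b))).sum)).sum := by
    rw [Fop, ← Multiset.sum_map_add]
    apply congrArg
    apply Multiset.map_congr rfl
    intro a ha
    rw [Eop, Multiset.map_cons, Multiset.sum_cons, Multiset.erase_cons_head,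
      Multiset.cons_erase ha]
    apply congrArg
    apply congrArg
    apply Multiset.map_congr rfl
    intro b hb
    rw [erase_cons_of_mem a hb]
  have hconstA : ((A.map (fun _ => v A B)).sum) = (Multiset.card A : ℝ) * v A B := by
    rw [Multiset.map_const', Multiset.sum_replicate, nsmul_eq_mul]
  have hconstB : ((B.map (fun _ => v A B)).sum) = (Multiset.card B : ℝ) * v A B := by
    rw [Multiset.map_const', Multiset.sum_replicate, nsmul_eq_mul]
  rw [hE, hF, hconstA, hconstB, sum_map_swap]
  ring

/-- A Killing tensor of valence `ℓ` on flat `ℝⁿ`: a smooth symmetric `ℓ`-tensor field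
`X` (components indexed by `m : Fin ℓ → Fin n`) with `∂_{(a}X_{bc⋯de)} = 0`, i.e. the
symmetrisation `∂_a X_m + Σᵢ ∂_{mᵢ} X_{m[i↦a]} = 0`. -/
def IsKillingTensor {n ℓ : ℕ} (X : (Fin n → ℝ) → (Fin ℓ → Fin n) → ℝ) : Prop :=
  (∀ m, ContDiff ℝ (⊤ : ℕ∞) fun x => X x m) ∧
  (∀ x (σ : Equiv.Perm (Fin ℓ)) (m : Fin ℓ → Fin n), X x (m ∘ σ) = X x m) ∧
  (∀ x (a : Fin n) (m : Fin ℓ → Fin n),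
    pd a (fun y => X y m) x
      + ∑ i, pd (m i) (fun y => X y (Function.update m i a)) x = 0)

lemma msOf_get {ℓ : ℕ} (M : List (Fin n)) (h : M.length = ℓ) :
    msOf (fun i : Fin ℓ => M.get (Fin.cast h.symm i)) = (M : Multiset (Fin n)) := by
  have : List.ofFn (fun i : Fin ℓ => M.get (Fin.cast h.symm i)) = M := by
    apply List.ext_getElem
    · simp [h]
    · intro i h1 h2
      simp [List.getElem_ofFn]
  rw [msOf, this]

section core
variable {ℓ : ℕ} (X : (Fin n → ℝ) → (Fin ℓ → Fin n) → ℝ) (x : Fin n → ℝ)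

noncomputable def uu (A B : Multiset (Fin n)) : ℝ :=
  if h : B.toList.length = ℓ then
    pdList A.toList (fun y => X y (fun i => B.toList.get (Fin.cast h.symm i))) x
  else 0

noncomputable def uIter (k : ℕ) : Multiset (Fin n) → Multiset (Fin n) → ℝ :=
  Fop^[k] (uu X x)

variable {X x}

lemma Xcongr (hX : IsKillingTensor X) {m₁ m₂ : Fin ℓ → Fin n} (h : msOf m₁ = msOf m₂) (y : Fin n → ℝ) :
    X y m₁ = X y m₂ := by
  obtain ⟨σ, hσ⟩ := exists_perm_of_msOf_eq m₁ m₂ h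
  rw [hσ, hX.2.1]

/-- S1: evaluation of `uu` on concrete list/tuple data. -/
lemma uu_eval (hX : IsKillingTensor X) (m : Fin ℓ → Fin n) (L : List (Fin n))
    (A : Multiset (Fin n)) (hL : (L : Multiset (Fin n)) = A) :
    uu X x A (msOf m) = pdList L (fun y => X y m) x := by
  have hcard : (msOf m).toList.length = ℓ := by
    rw [Multiset.length_toList, card_msOf]
  rw [uu, dif_pos hcard]
  have hfun : (fun y => X y (fun i => (msOf m).toList.get (Fin.cast hcard.symm i)))
      = fun y => X y m := by
    funext y
    apply Xcongr hX
    rw [msOf_get _ hcard, Multiset.coe_toList]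
  rw [hfun]
  have hperm : A.toList.Perm L := by
    rw [← Multiset.coe_eq_coe, Multiset.coe_toList, hL]
  exact congrFun (pdList_perm (hX.1 m) hperm) x

/-- S2: the differentiated Killing equation, in operator form. -/
lemma Eop_uu (hX : IsKillingTensor X) (A B : Multiset (Fin n))
    (hB : Multiset.card B = ℓ + 1) : Eop (uu X x) A B = 0 := by
  have hM : B.toList.length = ℓ + 1 := by rw [Multiset.length_toList, hB]
  set m' : Fin (ℓ+1) → Fin n := fun i => B.toList.get (Fin.cast hM.symm i) with hm'
  have hBm : msOf m' = B := by rw [hm', msOf_get _ hM, Multiset.coe_toList]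
  have hstep : Eop (uu X x) A B
      = ∑ i : Fin (ℓ+1), uu X x (m' i ::ₘ A) (B.erase (m' i)) := by
    rw [Eop, ← hBm]
    rw [show msOf m' = ((List.ofFn m' : List (Fin n)) : Multiset (Fin n)) from rfl]
    rw [Multiset.map_coe, Multiset.sum_coe, List.map_ofFn, List.sum_ofFn]
    simp only [Function.comp_apply, hBm]
  have herase : ∀ i : Fin (ℓ+1), B.erase (m' i) = msOf (m' ∘ i.succAbove) := by
    intro i
    conv_lhs => rw [← hBm, msOf_succAbove m' i]
    rw [Multiset.erase_cons_head]
  have hterm : ∀ i : Fin (ℓ+1),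
      uu X x (m' i ::ₘ A) (B.erase (m' i))
        = pdList A.toList (pd (m' i) (fun y => X y (m' ∘ i.succAbove))) x := by
    intro i
    rw [herase i, uu_eval hX _ (A.toList ++ [m' i]) _ (by
      rw [show ((A.toList ++ [m' i] : List (Fin n)) : Multiset (Fin n))
          = (↑A.toList + ↑[m' i] : Multiset (Fin n)) from rfl]
      rw [Multiset.coe_toList]
      rw [show (↑[m' i] : Multiset (Fin n)) = ({m' i} : Multiset (Fin n)) from rfl]
      rw [add_comm, Multiset.singleton_add])]
    rw [pdList_append]
    rfl
  have hg : ∀ i : Fin (ℓ+1), ContDiff ℝ (⊤ : ℕ∞) (pd (m' i) (fun y => X y (m' ∘ i.succAbove))) :=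
    fun i => pd_contDiff (hX.1 _) _
  rw [hstep]
  simp only [hterm]
  rw [show (∑ i : Fin (ℓ+1), pdList A.toList (pd (m' i) fun y => X y (m' ∘ i.succAbove)) x)
      = pdList A.toList (fun y => ∑ i : Fin (ℓ+1), pd (m' i) (fun z => X z (m' ∘ i.succAbove)) y) x
    from (congrFun (pdList_sum hg A.toList) x).symm]
  have hzero : (fun y => ∑ i : Fin (ℓ+1), pd (m' i) (fun z => X z (m' ∘ i.succAbove)) y)
      = fun _ => (0:ℝ) := by
    funext y
    set a := m' (Fin.last ℓ) with ha
    set m : Fin ℓ → Fin n := m' ∘ Fin.castSucc with hm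
    rw [Fin.sum_univ_castSucc]
    have hlast : (fun z => X z (m' ∘ (Fin.last ℓ).succAbove)) = fun z => X z m := by
      funext z
      congr 1
      funext j
      simp [hm, Fin.succAbove_last]
    have hcast : ∀ i' : Fin ℓ,
        (fun z => X z (m' ∘ (Fin.castSucc i').succAbove))
          = fun z => X z (Function.update m i' a) := by
      intro i'
      funext z
      apply Xcongr hX
      set S : Multiset (Fin n) := ∑ j ∈ Finset.univ.erase i', {m j} with hS
      have hmS : msOf m = {m i'} + S := by
        rw [msOf_eq_sum, hS]
        exact (Finset.add_sum_erase _ _ (Finset.mem_univ i')).symm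
      have hupd : msOf (Function.update m i' a) = {a} + S := by
        rw [msOf_eq_sum]
        have hfun2 : (fun j => ({Function.update m i' a j} : Multiset (Fin n)))
            = Function.update (fun j => ({m j} : Multiset (Fin n))) i' {a} := by
          funext j
          by_cases hj : j = i'
          · subst hj; simp
          · simp [Function.update_of_ne hj]
        rw [hfun2, Finset.sum_update_of_mem (Finset.mem_univ i'), hS,
          Finset.sdiff_singleton_eq_erase]
      have h1 : m' (Fin.castSucc i') ::ₘ msOf (m' ∘ (Fin.castSucc i').succAbove) = msOf m' :=
        (msOf_succAbove m' _).symm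
      have h2 : msOf m' = msOf m + {a} := by
        rw [msOf_eq_sum, Fin.sum_univ_castSucc, msOf_eq_sum]
        rfl
      have h4 : m' (Fin.castSucc i') = m i' := rfl
      rw [h2, hmS, h4] at h1
      have h1' : {m i'} + msOf (m' ∘ (Fin.castSucc i').succAbove)
          = {m i'} + (S + {a}) := by
        rw [Multiset.singleton_add, h1, add_assoc]
      have h5 := add_left_cancel h1'
      rw [h5, hupd, add_comm]
    simp only [hcast]
    rw [hlast]
    rw [add_comm]
    exact hX.2.2 y a m
  rw [hzero, pdList_zero]

lemma sq_mul_Fop (k : ℕ) (A B : Multiset (Fin n)) :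
    ((k:ℝ))^2 * Fop (uIter X x (k-1)) A B = ((k:ℝ))^2 * uIter X x k A B := by
  cases k with
  | zero => simp
  | succ k' =>
    have : uIter X x (k'+1) = Fop (uIter X x k') := Function.iterate_succ_apply' _ _ _
    rw [this]
    rfl

lemma Pk (hX : IsKillingTensor X) : ∀ (k : ℕ), k ≤ ℓ → ∀ A B : Multiset (Fin n),
    Multiset.card A = ℓ + k → Multiset.card B = ℓ + 1 - k →
    Eop (uIter X x k) A B = -((k:ℝ))^2 * uIter X x (k-1) A B := by
  intro k
  induction k with
  | zero =>
    intro _ A B _ hB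
    have : uIter X x 0 = uu X x := rfl
    rw [this, Eop_uu hX A B (by simpa using hB)]
    simp
  | succ k ih =>
    intro hk A B hA hB
    have hk' : k ≤ ℓ := by omega
    have e1 : uIter X x (k+1) = Fop (uIter X x k) := Function.iterate_succ_apply' _ _ _
    rw [e1]
    have comm := EF_commutator (uIter X x k) A B
    have e2 : Fop (Eop (uIter X x k)) A B = -((k:ℝ))^2 * Fop (uIter X x (k-1)) A B := by
      rw [Fop, Fop, ← Multiset.sum_map_mul_left]
      congr 1
      apply Multiset.map_congr rfl
      intro a ha
      exact ih hk' (A.erase a) (a ::ₘ B)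
        (by rw [Multiset.card_erase_of_mem ha, hA]; rfl)
        (by rw [Multiset.card_cons, hB]; omega)
    have hh := sq_mul_Fop (X := X) (x := x) k A B
    have hcA : (Multiset.card A : ℝ) = (ℓ:ℝ) + k + 1 := by rw [hA]; push_cast; ring
    have hcB : (Multiset.card B : ℝ) = (ℓ:ℝ) - k := by
      rw [hB, Nat.cast_sub (by omega : k+1 ≤ ℓ+1)]; push_cast; ring
    rw [hcA, hcB] at comm
    have hkk : ((k+1 : ℕ):ℝ) = (k:ℝ) + 1 := by push_cast; ring
    rw [hkk, show (k+1)-1 = k from rfl]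
    linear_combination comm + e2 - hh

lemma top0 (hX : IsKillingTensor X) (A : Multiset (Fin n))
    (hA : Multiset.card A = 2*ℓ+1) : uIter X x ℓ A 0 = 0 := by
  have comm := EF_commutator (uIter X x ℓ) A 0
  have hE0 : Eop (Fop (uIter X x ℓ)) A 0 = 0 := by simp [Eop]
  have e2 : Fop (Eop (uIter X x ℓ)) A 0 = -((ℓ:ℝ))^2 * Fop (uIter X x (ℓ-1)) A 0 := by
    rw [Fop, Fop, ← Multiset.sum_map_mul_left]
    congr 1
    apply Multiset.map_congr rfl
    intro a ha
    exact Pk hX ℓ le_rfl (A.erase a) (a ::ₘ 0)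
      (by rw [Multiset.card_erase_of_mem ha, hA, Nat.pred_eq_sub_one]; omega)
      (by simp)
  have hh := sq_mul_Fop (X := X) (x := x) ℓ A 0
  have hcA : (Multiset.card A : ℝ) = 2*(ℓ:ℝ) + 1 := by rw [hA]; push_cast; ring
  rw [hcA, hE0] at comm
  have hfin : ((ℓ:ℝ)+1)^2 * uIter X x ℓ A 0 = 0 := by
    have hc0 : (Multiset.card (0 : Multiset (Fin n)) : ℝ) = 0 := by simp
    rw [hc0] at comm
    linear_combination comm + e2 - hh
  have hne : ((ℓ:ℝ)+1)^2 ≠ 0 := by positivity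
  exact (mul_eq_zero.mp hfin).resolve_left hne

lemma descend (hX : IsKillingTensor X) : ∀ (j : ℕ), j ≤ ℓ → ∀ A B : Multiset (Fin n),
    Multiset.card A = 2*ℓ+1-j → Multiset.card B = j → uIter X x (ℓ-j) A B = 0 := by
  intro j
  induction j with
  | zero =>
    intro _ A B hA hB
    rw [Multiset.card_eq_zero.mp hB, Nat.sub_zero]
    exact top0 hX A (by omega)
  | succ j ih =>
    intro hj A B hA hB
    have hp := Pk (X := X) (x := x) hX (ℓ-j) (by omega) A B (by omega) (by omega)
    have hzero : Eop (uIter X x (ℓ-j)) A B = 0 := by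
      rw [Eop]
      rw [Multiset.map_congr rfl (fun b hb => ih (by omega) (b ::ₘ A) (B.erase b)
        (by rw [Multiset.card_cons, hA]; omega)
        (by rw [Multiset.card_erase_of_mem hb, hB]; rfl))]
      simp
    rw [hzero] at hp
    have hne : (((ℓ-j : ℕ):ℝ))^2 ≠ 0 := by
      have : ((ℓ-j : ℕ):ℝ) ≠ 0 := Nat.cast_ne_zero.mpr (by omega)
      positivity
    have := (mul_eq_zero.mp hp.symm).resolve_left (by simpa using hne)
    rw [show ℓ - (j+1) = ℓ - j - 1 from by omega]
    exact this

lemma killing_pdList_zero (hX : IsKillingTensor X) (l : List (Fin n))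
    (hl : l.length = ℓ + 1) (m : Fin ℓ → Fin n) :
    pdList l (fun y => X y m) x = 0 := by
  have h0 := descend (X := X) (x := x) hX ℓ le_rfl (l : Multiset (Fin n)) (msOf m)
    (by rw [Multiset.coe_card, hl]; omega) (card_msOf m)
  rw [Nat.sub_self] at h0
  have huI : uIter X x 0 = uu X x := rfl
  rw [huI] at h0
  rw [← uu_eval hX m l (l : Multiset (Fin n)) rfl]
  exact h0
end core

/-- On flat `ℝⁿ`, every Killing tensor of valence `ℓ` is a polynomial of degree at
most `ℓ`: all its partial derivatives of order `ℓ+1` vanish.  In particular, for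
`ℓ = 2`, a smooth symmetric 2-tensor field `X_{bc}` with `∂_{(a}X_{bc)} = 0` has all
third-order partial derivatives vanishing. -/
theorem stmt16 (n ℓ : ℕ) :
    (∀ X : (Fin n → ℝ) → (Fin ℓ → Fin n) → ℝ, IsKillingTensor X →
      ∀ (l : List (Fin n)), l.length = ℓ + 1 →
        ∀ (m : Fin ℓ → Fin n) x, pdList l (fun y => X y m) x = 0) ∧
    (∀ X : (Fin n → ℝ) → Fin n → Fin n → ℝ,
      (∀ b c, ContDiff ℝ (⊤ : ℕ∞) fun x => X x b c) →
      (∀ x b c, X x b c = X x c b) →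
      (∀ x a b c,
        pd a (fun y => X y b c) x + pd b (fun y => X y c a) x
          + pd c (fun y => X y a b) x = 0) →
      ∀ x a p q b c,
        pd a (pd p (pd q fun y => X y b c)) x = 0) := by
  constructor
  · intro X hX l hl m x
    exact killing_pdList_zero hX l hl m
  · intro X hsm hsym hkill x a p q b c
    set X' : (Fin n → ℝ) → (Fin 2 → Fin n) → ℝ := fun y m => X y (m 0) (m 1) with hX'
    have hK : IsKillingTensor X' := by
      refine ⟨fun m => hsm (m 0) (m 1), ?_, ?_⟩
      · intro y σ m
        show X y (m (σ 0)) (m (σ 1)) = X y (m 0) (m 1)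
        by_cases h0 : σ 0 = 0
        · have h1 : σ 1 = 1 := by
            have hne : σ 1 ≠ σ 0 := fun h => by simpa using σ.injective h
            rw [h0] at hne
            exact Fin.eq_one_of_ne_zero _ hne
          rw [h0, h1]
        · have h0' : σ 0 = 1 := Fin.eq_one_of_ne_zero _ h0
          have h1 : σ 1 = 0 := by
            have hne : σ 1 ≠ σ 0 := fun h => by simpa using σ.injective h
            rw [h0'] at hne
            have := Fin.eq_one_of_ne_zero (σ 1)
            by_contra hc
            exact hne (this hc)
          rw [h0', h1]
          exact hsym y (m 1) (m 0)
      · intro y e m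
        have hupd0 : ∀ z, X' z (Function.update m 0 e) = X z e (m 1) := by
          intro z
          show X z (Function.update m 0 e 0) (Function.update m 0 e 1) = _
          rw [Function.update_self, Function.update_of_ne (by decide)]
        have hupd1 : ∀ z, X' z (Function.update m 1 e) = X z (m 0) e := by
          intro z
          show X z (Function.update m 1 e 0) (Function.update m 1 e 1) = _
          rw [Function.update_self, Function.update_of_ne (by decide)]
        rw [Fin.sum_univ_two]
        have e0 : (fun z => X' z (Function.update m 0 e)) = fun z => X z (m 1) e := by
          funext z; rw [hupd0 z]; exact hsym z e (m 1)
        have e1 : (fun z => X' z (Function.update m 1 e)) = fun z => X z (m 0) e := by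
          funext z; rw [hupd1 z]
        rw [e0, e1]
        have hk := hkill y e (m 0) (m 1)
        have hs1 : (fun z => X z (m 1) e) = fun z => X z (m 1) e := rfl
        have hr1 : (fun z => X z ((m 1)) e) = fun z => X z (m 1) e := rfl
        have hk' : pd e (fun z => X z (m 0) (m 1)) y
            + pd (m 0) (fun z => X z (m 1) e) y + pd (m 1) (fun z => X z e (m 0)) y = 0 := hk
        have hc2 : (fun z => X z (m 0) e) = fun z => X z e (m 0) := by
          funext z; exact hsym z (m 0) e
        rw [hc2]
        have hfirst : (fun z => X' z m) = fun z => X z (m 0) (m 1) := rfl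
        rw [hfirst]
        linarith [hk']
    have hres := killing_pdList_zero (x := x) hK [a, p, q] rfl ![b, c]
    have hmeq : (fun y => X' y ![b, c]) = fun y => X y b c := rfl
    rw [hmeq] at hres
    exact hres
end
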